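/- arXiv:2312.03691 — 4 statements merged into one kernel-verified Lean document; each statement's English description precedes it below -/
import Mathlib

section
/- Consider the model on n nodes where each node is independently 'active' with probability √p (0 < p ≤ 1), and the output graph is the complete graph on active nodes. Then each edge appears with probability p, the overlap equals p, and the expected triangle count is C(n,3)·p^{3/2}; hence the node independent triangle bound (1/6)n³·Ov^{3/2} is tight up to constant factors. -/
/-!
A set `T` of nodes is a clique of the output graph exactly when all its nodes are active, which
under the product of Bernoulli(√p) laws has probability `(√p) ^ #T`. Hence an edge has
probability `p`, an edge shared by two independent samples `p²`, and a triangle `p ^ (3/2)`;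
by the hockey-stick identity the sums over `i < j` and `i < j < k` count `C(n,2)` pairs and
`C(n,3)` triples.
-/

open MeasureTheory Finset

theorem Nat.sum_range_choose_eq_choose_succ (m k : ℕ) :
    ∑ i ∈ range m, i.choose k = m.choose (k + 1) := by
  induction m with
  | zero => simp
  | succ m ih => rw [sum_range_succ, ih, Nat.choose_succ_succ' m, add_comm]

namespace Fin

theorem sum_Iio_choose {n : ℕ} (j : Fin n) (k : ℕ) :
    ∑ i ∈ Iio j, (i : ℕ).choose k = (j : ℕ).choose (k + 1) := by
  rw [← Nat.sum_range_choose_eq_choose_succ, ← Nat.Iio_eq_range, ← map_valEmbedding_Iio,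
    sum_map]
  rfl

theorem sum_univ_choose (n k : ℕ) : ∑ i : Fin n, (i : ℕ).choose k = n.choose (k + 1) := by
  rw [sum_univ_eq_sum_range (·.choose k), Nat.sum_range_choose_eq_choose_succ]

variable {M : Type*} [AddCommMonoid M] {n : ℕ}

theorem sum_ite_lt (j : Fin n) (g : Fin n → M) :
    ∑ i, (if i < j then g i else 0) = ∑ i ∈ Iio j, g i := by
  rw [← sum_filter, filter_gt_eq_Iio]

theorem sum_Iio_const_eq_choose_smul (j : Fin n) (k : ℕ) {g : Fin n → M} {c : M}
    (hg : ∀ i < j, g i = ((i : ℕ).choose k) • c) :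
    ∑ i ∈ Iio j, g i = (j : ℕ).choose (k + 1) • c := by
  rw [sum_congr rfl fun i hi => hg i (mem_Iio.1 hi), ← sum_smul, sum_Iio_choose]

theorem sum_sum_ite_lt_of_eq {f : Fin n → Fin n → M} {c : M}
    (hf : ∀ i j, i < j → f i j = c) :
    ∑ i, ∑ j, (if i < j then f i j else 0) = n.choose 2 • c := by
  have hpairs (j : Fin n) : ∑ i, (if i < j then f i j else 0) = (j : ℕ).choose 1 • c := by
    rw [sum_ite_lt]
    exact sum_Iio_const_eq_choose_smul j 0 fun i hij => by
      rw [hf i j hij, Nat.choose_zero_right, one_smul]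
  rw [sum_comm, sum_congr rfl fun j _ => hpairs j, ← sum_smul, sum_univ_choose]

theorem sum_sum_sum_ite_lt_lt_of_eq {f : Fin n → Fin n → Fin n → M} {c : M}
    (hf : ∀ i j k, i < j → j < k → f i j k = c) :
    ∑ i, ∑ j, ∑ k, (if i < j ∧ j < k then f i j k else 0) = n.choose 3 • c := by
  have htriples (k : Fin n) :
      ∑ j, ∑ i, (if i < j ∧ j < k then f i j k else 0) = (k : ℕ).choose 2 • c := by
    simp_rw [and_comm, ite_and, sum_ite_irrel, sum_const_zero, sum_ite_lt]
    exact sum_Iio_const_eq_choose_smul k 1 fun j hjk => sum_Iio_const_eq_choose_smul j 0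
      fun i hij => by rw [hf i j k hij hjk, Nat.choose_zero_right, one_smul]
  rw [(sum_congr rfl fun _ _ => sum_comm).trans
      (sum_comm.trans (sum_congr rfl fun _ _ => sum_comm)),
    sum_congr rfl fun k _ => htriples k, ← sum_smul, sum_univ_choose]

end Fin

noncomputable def bernoulliMeasure (q : ℝ) : Measure Bool :=
  ENNReal.ofReal q • Measure.dirac true + ENNReal.ofReal (1 - q) • Measure.dirac false

theorem bernoulliMeasure_singleton_true (q : ℝ) :
    bernoulliMeasure q {true} = ENNReal.ofReal q := by
  simp [bernoulliMeasure]

theorem isProbabilityMeasure_bernoulliMeasure {q : ℝ} (hq0 : 0 ≤ q) (hq1 : q ≤ 1) :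
    IsProbabilityMeasure (bernoulliMeasure q) := by
  constructor
  simp [bernoulliMeasure, ← ENNReal.ofReal_add hq0 (sub_nonneg.2 hq1)]

section ActiveNodes

variable {ι : Type*}

def allActive (T : Finset ι) : Set (ι → Bool) := (T : Set ι).pi fun _ => {true}

variable [DecidableEq ι]

def activeEdge (ω : ι → Bool) (i j : ι) : ℝ :=
  if i ≠ j ∧ ω i = true ∧ ω j = true then 1 else 0

variable {ω : ι → Bool} {i j k : ι}

theorem activeEdge_eq_indicator (hij : i ≠ j) :
    activeEdge ω i j = (allActive {i, j}).indicator 1 ω := by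
  by_cases hi : ω i = true <;> by_cases hj : ω j = true <;>
    simp [activeEdge, allActive, hij, hi, hj]

theorem activeEdge_mul_activeEdge_mul_activeEdge_eq_indicator (hij : i ≠ j) (hjk : j ≠ k)
    (hik : i ≠ k) :
    activeEdge ω i j * activeEdge ω j k * activeEdge ω i k =
      (allActive {i, j, k}).indicator 1 ω := by
  by_cases hi : ω i = true <;> by_cases hj : ω j = true <;> by_cases hk : ω k = true <;>
    simp [activeEdge, allActive, hij, hjk, hik, hi, hj, hk]

end ActiveNodes

section Integrals

variable {ι : Type*} [Fintype ι] {q : ℝ}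

theorem integral_indicator_allActive (hq0 : 0 ≤ q) (hq1 : q ≤ 1) (T : Finset ι) :
    ∫ ω, (allActive T).indicator 1 ω ∂(Measure.pi fun _ : ι => bernoulliMeasure q) =
      q ^ #T := by
  have := isProbabilityMeasure_bernoulliMeasure hq0 hq1
  rw [integral_indicator_one (Set.toFinite _).measurableSet, measureReal_def, allActive,
    Measure.pi_pi_finset, prod_const, bernoulliMeasure_singleton_true, ENNReal.toReal_pow,
    ENNReal.toReal_ofReal hq0]

variable [DecidableEq ι] {i j k : ι}

theorem integral_activeEdge (hq0 : 0 ≤ q) (hq1 : q ≤ 1) (hij : i ≠ j) :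
    ∫ ω, activeEdge ω i j ∂(Measure.pi fun _ : ι => bernoulliMeasure q) = q ^ 2 := by
  simp_rw [activeEdge_eq_indicator hij]
  rw [integral_indicator_allActive hq0 hq1, card_pair hij]

theorem integral_activeEdge_mul_activeEdge (hq0 : 0 ≤ q) (hq1 : q ≤ 1) (hij : i ≠ j) :
    ∫ x, activeEdge x.1 i j * activeEdge x.2 i j
      ∂((Measure.pi fun _ : ι => bernoulliMeasure q).prod
        (Measure.pi fun _ : ι => bernoulliMeasure q)) = q ^ 2 * q ^ 2 := by
  rw [integral_prod_mul (fun ω => activeEdge ω i j) (fun ω => activeEdge ω i j),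
    integral_activeEdge hq0 hq1 hij]

theorem integral_activeTriangle (hq0 : 0 ≤ q) (hq1 : q ≤ 1) (hij : i ≠ j) (hjk : j ≠ k)
    (hik : i ≠ k) :
    ∫ ω, activeEdge ω i j * activeEdge ω j k * activeEdge ω i k
      ∂(Measure.pi fun _ : ι => bernoulliMeasure q) = q ^ 3 := by
  simp_rw [activeEdge_mul_activeEdge_mul_activeEdge_eq_indicator hij hjk hik]
  rw [integral_indicator_allActive hq0 hq1, card_insert_of_notMem (by simp [hij, hik]),
    card_pair hjk]

end Integrals

theorem integral_sum_activeTriangles {n : ℕ} {q : ℝ} (hq0 : 0 ≤ q) (hq1 : q ≤ 1) :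
    ∫ ω, ∑ i : Fin n, ∑ j : Fin n, ∑ k : Fin n,
        (if i < j ∧ j < k then activeEdge ω i j * activeEdge ω j k * activeEdge ω i k else 0)
      ∂(Measure.pi fun _ : Fin n => bernoulliMeasure q) = n.choose 3 • q ^ 3 := by
  have := isProbabilityMeasure_bernoulliMeasure hq0 hq1
  have htriangle (i j k : Fin n) :
      ∫ ω, (if i < j ∧ j < k then activeEdge ω i j * activeEdge ω j k * activeEdge ω i k
          else 0) ∂(Measure.pi fun _ : Fin n => bernoulliMeasure q) =
        if i < j ∧ j < k then q ^ 3 else 0 := by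
    split_ifs with h
    · exact integral_activeTriangle hq0 hq1 h.1.ne h.2.ne (h.1.trans h.2).ne
    · exact integral_zero _ _
  simp only [integral_finsetSum _ fun _ _ => Integrable.of_finite, htriangle]
  exact Fin.sum_sum_sum_ite_lt_lt_of_eq fun _ _ _ _ _ => rfl

open MeasureTheory Classical in
theorem active_nodes_overlap_and_triangles
    (n : ℕ) (hn : 2 ≤ n) (p : ℝ) (hp : 0 < p) (hp1 : p ≤ 1)
    (μ : Measure (Fin n → Bool))
    (hμ : μ = Measure.pi (fun _ : Fin n =>
      ENNReal.ofReal (Real.sqrt p) • Measure.dirac true +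
        ENNReal.ofReal (1 - Real.sqrt p) • Measure.dirac false))
    (A : (Fin n → Bool) → Fin n → Fin n → ℝ)
    (hA : ∀ ω i j, A ω i j = if i ≠ j ∧ ω i = true ∧ ω j = true then 1 else 0) :
    (∀ i j : Fin n, i ≠ j → (∫ ω, A ω i j ∂μ) = p) ∧
    (∑ i : Fin n, ∑ j : Fin n,
          if i < j then ∫ q, A q.1 i j * A q.2 i j ∂(μ.prod μ) else 0) /
        (∑ i : Fin n, ∑ j : Fin n, if i < j then ∫ ω, A ω i j ∂μ else 0) = p ∧
    (∫ ω, ∑ i : Fin n, ∑ j : Fin n, ∑ k : Fin n,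
        (if i < j ∧ j < k then A ω i j * A ω j k * A ω i k else 0) ∂μ) =
      (n.choose 3 : ℝ) * p * Real.sqrt p := by
  obtain rfl : μ = Measure.pi fun _ => bernoulliMeasure (√p) := hμ
  obtain rfl : A = activeEdge := funext₃ hA
  have hq0 : 0 ≤ √p := Real.sqrt_nonneg p
  have hq1 : √p ≤ 1 := Real.sqrt_le_one.2 hp1
  have hsq : √p ^ 2 = p := Real.sq_sqrt hp.le
  have hedge (i j : Fin n) (hij : i ≠ j) :
      ∫ ω, activeEdge ω i j ∂(Measure.pi fun _ => bernoulliMeasure (√p)) = p := by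
    rw [integral_activeEdge hq0 hq1 hij, hsq]
  refine ⟨hedge, ?_, ?_⟩
  · have hpairs : (n.choose 2 : ℝ) ≠ 0 := Nat.cast_ne_zero.2 (Nat.choose_pos hn).ne'
    rw [Fin.sum_sum_ite_lt_of_eq fun i j hij => integral_activeEdge_mul_activeEdge hq0 hq1 hij.ne,
      Fin.sum_sum_ite_lt_of_eq fun i j hij => hedge i j hij.ne, hsq, nsmul_eq_mul, nsmul_eq_mul,
      mul_div_mul_left _ _ hpairs, mul_div_cancel_right₀ _ hp.ne']
  · rw [integral_sum_activeTriangles hq0 hq1, nsmul_eq_mul, pow_succ, hsq, mul_assoc]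
end

section
/- Let P ∈ [0,1]^{n×n} be the symmetric edge probability matrix of an edge independent model A with volume Vol and overlap Ov. Then the expected number of 4-cycles satisfies E[C₄(A)] ≤ (1/8)(2·Ov·Vol)², and hence E[C₄(A)] = O(n⁴ · Ov⁴). -/
/-!
Dropping the distinctness constraint only adds nonnegative terms, and the full sum
`∑ P i j * P j k * P k l * P l i` is `tr (P ^ 4) = ‖P ^ 2‖_F ^ 2 ≤ ‖P‖_F ^ 4`, where
`‖P‖_F ^ 2 = 2 * Ov * Vol` because every edge is counted twice. For the second bound,
Cauchy–Schwarz gives `Vol ^ 2 ≤ n ^ 2 * Ov * Vol`, that is `Vol ≤ n ^ 2 * Ov`.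
-/

open Finset

theorem sum_sum_eq_two_mul_sum_sum_ite_lt {ι R : Type*} [Fintype ι] [LinearOrder ι]
    [NonAssocSemiring R] (f : ι → ι → R) (hsymm : ∀ i j, f i j = f j i) (hdiag : ∀ i, f i i = 0) :
    ∑ i, ∑ j, f i j = 2 * ∑ i, ∑ j, if i < j then f i j else 0 := by
  have hsplit : ∑ i, ∑ j, f i j
      = (∑ i, ∑ j, if i < j then f i j else 0) + ∑ i, ∑ j, if j < i then f i j else 0 := by
    simp only [← sum_add_distrib]
    refine sum_congr rfl fun i _ ↦ sum_congr rfl fun j _ ↦ ?_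
    rcases lt_trichotomy i j with h | rfl | h
    · simp [h, h.not_gt]
    · simp [hdiag]
    · simp [h, h.not_gt]
  have hswap : (∑ i, ∑ j, if j < i then f i j else 0) = ∑ i, ∑ j, if i < j then f i j else 0 := by
    rw [sum_comm]
    simp only [hsymm]
  rw [hsplit, hswap, two_mul]

theorem sum_sum_sq_sum_mul_le {ι κ μ R : Type*} [Fintype ι] [Fintype κ] [Fintype μ]
    [CommRing R] [LinearOrder R] [IsStrictOrderedRing R] (A : ι → κ → R) (B : κ → μ → R) :
    ∑ i, ∑ k, (∑ j, A i j * B j k) ^ 2 ≤ (∑ i, ∑ j, A i j ^ 2) * ∑ j, ∑ k, B j k ^ 2 := by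
  calc ∑ i, ∑ k, (∑ j, A i j * B j k) ^ 2
      ≤ ∑ i, ∑ k, (∑ j, A i j ^ 2) * ∑ j, B j k ^ 2 := by
        gcongr with i _ k _
        exact sum_mul_sq_le_sq_mul_sq _ _ _
    _ = (∑ i, ∑ j, A i j ^ 2) * ∑ j, ∑ k, B j k ^ 2 := by
        rw [← sum_mul_sum]
        exact congrArg _ sum_comm

theorem sum_closed_walks_four_eq {ι R : Type*} [Fintype ι] [CommSemiring R] (P : ι → ι → R)
    (hsymm : ∀ i j, P i j = P j i) :
    ∑ i, ∑ j, ∑ k, ∑ l, P i j * P j k * P k l * P l i = ∑ i, ∑ k, (∑ j, P i j * P j k) ^ 2 := by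
  refine sum_congr rfl fun i _ ↦ ?_
  rw [sum_comm]
  refine sum_congr rfl fun k _ ↦ ?_
  rw [sq, sum_mul_sum]
  refine sum_congr rfl fun j _ ↦ sum_congr rfl fun l _ ↦ ?_
  rw [hsymm k l, hsymm l i]
  ring

theorem sum_four_cycles_le_sq_sum_sq {ι R : Type*} [Fintype ι] [DecidableEq ι]
    [CommRing R] [LinearOrder R] [IsStrictOrderedRing R] (P : ι → ι → R)
    (hnonneg : ∀ i j, 0 ≤ P i j) (hsymm : ∀ i j, P i j = P j i) :
    (∑ i, ∑ j, ∑ k, ∑ l, if i ≠ j ∧ i ≠ k ∧ i ≠ l ∧ j ≠ k ∧ j ≠ l ∧ k ≠ l then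
        P i j * P j k * P k l * P l i else 0) ≤ (∑ i, ∑ j, P i j ^ 2) ^ 2 := by
  calc (∑ i, ∑ j, ∑ k, ∑ l, if i ≠ j ∧ i ≠ k ∧ i ≠ l ∧ j ≠ k ∧ j ≠ l ∧ k ≠ l then
          P i j * P j k * P k l * P l i else 0)
      ≤ ∑ i, ∑ j, ∑ k, ∑ l, P i j * P j k * P k l * P l i := by
        gcongr with i _ j _ k _ l _
        split_ifs
        · exact le_rfl
        · exact mul_nonneg (mul_nonneg (mul_nonneg (hnonneg i j) (hnonneg j k)) (hnonneg k l))
            (hnonneg l i)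
    _ = ∑ i, ∑ k, (∑ j, P i j * P j k) ^ 2 := sum_closed_walks_four_eq P hsymm
    _ ≤ (∑ i, ∑ j, P i j ^ 2) * ∑ j, ∑ k, P j k ^ 2 := sum_sum_sq_sum_mul_le P P
    _ = (∑ i, ∑ j, P i j ^ 2) ^ 2 := (sq _).symm

theorem sq_sum_sum_le_card_mul_card_mul_sum_sum_sq {ι κ R : Type*} [Fintype ι] [Fintype κ]
    [CommRing R] [LinearOrder R] [IsStrictOrderedRing R] (f : ι → κ → R) :
    (∑ i, ∑ j, f i j) ^ 2 ≤ Fintype.card ι * Fintype.card κ * ∑ i, ∑ j, f i j ^ 2 := by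
  simpa [← Fintype.sum_prod_type'] using
    sq_sum_le_card_mul_sum_sq (s := (univ : Finset (ι × κ))) (f := fun p ↦ f p.1 p.2)

theorem edge_independent_four_cycle_bound_general
    (n : ℕ) (P : Fin n → Fin n → ℝ)
    (h0 : ∀ i j, 0 ≤ P i j)
    (hsym : ∀ i j, P i j = P j i) (hdiag : ∀ i, P i i = 0)
    (Vol Ov : ℝ)
    (hVol : Vol = ∑ i : Fin n, ∑ j : Fin n, if i < j then P i j else 0)
    (hVolpos : 0 < Vol)
    (hOv : Ov = (∑ i : Fin n, ∑ j : Fin n, if i < j then P i j ^ 2 else 0) / Vol) :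
    (1 / 8 : ℝ) * (∑ i : Fin n, ∑ j : Fin n, ∑ k : Fin n, ∑ l : Fin n,
        if i ≠ j ∧ i ≠ k ∧ i ≠ l ∧ j ≠ k ∧ j ≠ l ∧ k ≠ l then
          P i j * P j k * P k l * P l i else 0) ≤ (1 / 8 : ℝ) * (2 * Ov * Vol) ^ 2 ∧
    (1 / 8 : ℝ) * (∑ i : Fin n, ∑ j : Fin n, ∑ k : Fin n, ∑ l : Fin n,
        if i ≠ j ∧ i ≠ k ∧ i ≠ l ∧ j ≠ k ∧ j ≠ l ∧ k ≠ l then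
          P i j * P j k * P k l * P l i else 0) ≤ (n : ℝ) ^ 4 * Ov ^ 4 := by
  set t := ∑ i : Fin n, ∑ j : Fin n, if i < j then P i j ^ 2 else 0
  have ht : t = Ov * Vol := by rw [hOv]; field_simp
  have hOv0 : 0 ≤ Ov := hOv ▸ by positivity
  have hsum_sq : ∑ i, ∑ j, P i j ^ 2 = 2 * t :=
    sum_sum_eq_two_mul_sum_sum_ite_lt _ (fun i j ↦ by rw [hsym]) (fun i ↦ by simp [hdiag])
  have hcycles := sum_four_cycles_le_sq_sum_sq P h0 hsym
  rw [hsum_sq, ht, ← mul_assoc] at hcycles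
  have hVol_sq : Vol ^ 2 ≤ n ^ 2 * t := by
    simpa [← hVol, ite_pow, ← sq] using
      sq_sum_sum_le_card_mul_card_mul_sum_sum_sq fun i j : Fin n ↦ if i < j then P i j else 0
  have hVol_le : Vol ≤ n ^ 2 * Ov :=
    le_of_mul_le_mul_right (by rw [ht] at hVol_sq; linarith) hVolpos
  have hfirst := mul_le_mul_of_nonneg_left hcycles (by norm_num : (0 : ℝ) ≤ 1 / 8)
  refine ⟨hfirst, hfirst.trans ?_⟩
  calc (1 / 8 : ℝ) * (2 * Ov * Vol) ^ 2 ≤ (Ov * Vol) ^ 2 := by nlinarith [sq_nonneg (Ov * Vol)]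
    _ ≤ (Ov * (n ^ 2 * Ov)) ^ 2 := by gcongr
    _ = (n : ℝ) ^ 4 * Ov ^ 4 := by ring

theorem edge_independent_four_cycle_bound
    (n : ℕ) (P : Fin n → Fin n → ℝ)
    (h0 : ∀ i j, 0 ≤ P i j) (h1 : ∀ i j, P i j ≤ 1)
    (hsym : ∀ i j, P i j = P j i) (hdiag : ∀ i, P i i = 0)
    (Vol Ov : ℝ)
    (hVol : Vol = ∑ i : Fin n, ∑ j : Fin n, if i < j then P i j else 0)
    (hVolpos : 0 < Vol)
    (hOv : Ov = (∑ i : Fin n, ∑ j : Fin n, if i < j then P i j ^ 2 else 0) / Vol) :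
    (1 / 8 : ℝ) * (∑ i : Fin n, ∑ j : Fin n, ∑ k : Fin n, ∑ l : Fin n,
        if i ≠ j ∧ i ≠ k ∧ i ≠ l ∧ j ≠ k ∧ j ≠ l ∧ k ≠ l then
          P i j * P j k * P k l * P l i else 0) ≤ (1 / 8 : ℝ) * (2 * Ov * Vol) ^ 2 ∧
    (1 / 8 : ℝ) * (∑ i : Fin n, ∑ j : Fin n, ∑ k : Fin n, ∑ l : Fin n,
        if i ≠ j ∧ i ≠ k ∧ i ≠ l ∧ j ≠ k ∧ j ≠ l ∧ k ≠ l then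
          P i j * P j k * P k l * P l i else 0) ≤ (n : ℝ) ^ 4 * Ov ^ 4 :=
  edge_independent_four_cycle_bound_general n P h0 hsym hdiag Vol Ov hVol hVolpos hOv
end

section
/- In a node independent graph model, for any three distinct nodes i, j, k, the probability that they form a triangle satisfies E[A_{ij}A_{jk}A_{ik}] ≤ sqrt( E[A_{ij}] · E[A_{jk}] · E[A_{ik}] ). -/
/-!
Let `G(x, z) = ∫ e(x, y) e(y, z) dμⱼ(y)` be the two-path density through the middle node, so that
the triangle probability is `∫ G(x, z) e(x, z) d(μᵢ ⊗ μₖ)`. Cauchy–Schwarz bounds its square by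
`∫ G² · ∫ e²`. Since `e` takes values in `[0, 1]` we have `e² ≤ e`, so `∫ e² ≤ E[A_ik]`, and a
second Cauchy–Schwarz in `y` gives `G(x, z)² ≤ (∫ e(x, y) dy) (∫ e(y, z) dy)`, whose integral
is `E[A_ij] E[A_jk]`.
-/

open MeasureTheory

section BoundedIntegrands

variable {α : Type*} [MeasurableSpace α] {μ : Measure α} {f g : α → ℝ}

theorem sq_integral_mul_le_integral_sq_mul_integral_sq (hf0 : 0 ≤ᵐ[μ] f) (hg0 : 0 ≤ᵐ[μ] g)
    (hf : MemLp f 2 μ) (hg : MemLp g 2 μ) :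
    (∫ x, f x * g x ∂μ) ^ 2 ≤ (∫ x, f x ^ 2 ∂μ) * ∫ x, g x ^ 2 ∂μ := by
  have holder := integral_mul_le_Lp_mul_Lq_of_nonneg Real.HolderConjugate.two_two hf0 hg0
    (by simpa using hf) (by simpa using hg)
  simp only [Real.rpow_two, ← Real.sqrt_eq_rpow] at holder
  rw [← Real.sqrt_mul (integral_nonneg fun x => sq_nonneg (f x))] at holder
  exact (Real.le_sqrt (integral_nonneg_of_ae (hf0.mp (hg0.mono fun x hg hf => mul_nonneg hf hg)))
    (mul_nonneg (integral_nonneg fun _ => sq_nonneg _) (integral_nonneg fun _ => sq_nonneg _))).mp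
    holder

variable [IsFiniteMeasure μ]

theorem memLp_of_nonneg_of_le_one (p : ENNReal) (hf : AEStronglyMeasurable f μ)
    (h0 : ∀ x, 0 ≤ f x) (h1 : ∀ x, f x ≤ 1) : MemLp f p μ :=
  .of_bound hf 1 <| ae_of_all _ fun x => by rw [Real.norm_of_nonneg (h0 x)]; exact h1 x

theorem integrable_of_nonneg_of_le_one (hf : AEStronglyMeasurable f μ) (h0 : ∀ x, 0 ≤ f x)
    (h1 : ∀ x, f x ≤ 1) : Integrable f μ :=
  memLp_one_iff_integrable.mp (memLp_of_nonneg_of_le_one 1 hf h0 h1)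

theorem integral_sq_le_integral_of_le_one (hf : AEStronglyMeasurable f μ) (h0 : ∀ x, 0 ≤ f x)
    (h1 : ∀ x, f x ≤ 1) : ∫ x, f x ^ 2 ∂μ ≤ ∫ x, f x ∂μ :=
  integral_mono (integrable_of_nonneg_of_le_one (hf.pow 2) (fun _ => sq_nonneg _)
      fun x => pow_le_one₀ (h0 x) (h1 x))
    (integrable_of_nonneg_of_le_one hf h0 h1) fun x => by
      simpa [sq] using mul_le_of_le_one_left (h0 x) (h1 x)

theorem sq_integral_mul_le_integral_mul_integral (hf : AEStronglyMeasurable f μ)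
    (hg : AEStronglyMeasurable g μ) (hf0 : ∀ x, 0 ≤ f x) (hf1 : ∀ x, f x ≤ 1)
    (hg0 : ∀ x, 0 ≤ g x) (hg1 : ∀ x, g x ≤ 1) :
    (∫ x, f x * g x ∂μ) ^ 2 ≤ (∫ x, f x ∂μ) * ∫ x, g x ∂μ :=
  (sq_integral_mul_le_integral_sq_mul_integral_sq (ae_of_all _ hf0) (ae_of_all _ hg0)
    (memLp_of_nonneg_of_le_one 2 hf hf0 hf1) (memLp_of_nonneg_of_le_one 2 hg hg0 hg1)).trans <|
    mul_le_mul (integral_sq_le_integral_of_le_one hf hf0 hf1)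
      (integral_sq_le_integral_of_le_one hg hg0 hg1) (integral_nonneg fun _ => sq_nonneg _)
      (integral_nonneg hf0)

end BoundedIntegrands

section TwoPath

variable {E : Type*} [MeasurableSpace E] {e : E × E → ℝ}

noncomputable def twoPathKernel (ν : Measure E) (e : E × E → ℝ) (p : E × E) : ℝ :=
  ∫ y, e (p.1, y) * e (y, p.2) ∂ν

theorem stronglyMeasurable_twoPathKernel (ν : Measure E) [SFinite ν] (hmeas : Measurable e) :
    StronglyMeasurable (twoPathKernel ν e) :=
  ((hmeas.comp (measurable_fst.fst.prodMk measurable_snd)).mul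
    (hmeas.comp (measurable_snd.prodMk measurable_fst.snd))).stronglyMeasurable.integral_prod_right'

theorem twoPathKernel_nonneg (ν : Measure E) (h0 : ∀ q, 0 ≤ e q) (p : E × E) :
    0 ≤ twoPathKernel ν e p :=
  integral_nonneg fun _ => mul_nonneg (h0 _) (h0 _)

theorem twoPathKernel_le_one (ν : Measure E) [IsProbabilityMeasure ν] (hmeas : Measurable e)
    (h0 : ∀ q, 0 ≤ e q) (h1 : ∀ q, e q ≤ 1) (p : E × E) : twoPathKernel ν e p ≤ 1 := by
  have h : ∀ y, e (p.1, y) * e (y, p.2) ≤ 1 := fun y => mul_le_one₀ (h1 _) (h0 _) (h1 _)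
  calc twoPathKernel ν e p ≤ ∫ _, (1 : ℝ) ∂ν :=
        integral_mono (integrable_of_nonneg_of_le_one
          ((hmeas.comp measurable_prodMk_left).mul
            (hmeas.comp measurable_prodMk_right)).aestronglyMeasurable
          (fun _ => mul_nonneg (h0 _) (h0 _)) h) (integrable_const 1) h
    _ = 1 := by simp

theorem memLp_twoPathKernel (ν : Measure E) [IsProbabilityMeasure ν] (hmeas : Measurable e)
    (h0 : ∀ q, 0 ≤ e q) (h1 : ∀ q, e q ≤ 1) (p : ENNReal) (μ : Measure (E × E))
    [IsFiniteMeasure μ] : MemLp (twoPathKernel ν e) p μ :=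
  memLp_of_nonneg_of_le_one p (stronglyMeasurable_twoPathKernel ν hmeas).aestronglyMeasurable
    (twoPathKernel_nonneg ν h0) (twoPathKernel_le_one ν hmeas h0 h1)

theorem sq_twoPathKernel_le (ν : Measure E) [IsFiniteMeasure ν] (hmeas : Measurable e)
    (h0 : ∀ q, 0 ≤ e q) (h1 : ∀ q, e q ≤ 1) (p : E × E) :
    twoPathKernel ν e p ^ 2 ≤ (∫ y, e (p.1, y) ∂ν) * ∫ y, e (y, p.2) ∂ν :=
  sq_integral_mul_le_integral_mul_integral
    (hmeas.comp measurable_prodMk_left).aestronglyMeasurable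
    (hmeas.comp measurable_prodMk_right).aestronglyMeasurable (fun _ => h0 _) (fun _ => h1 _)
    (fun _ => h0 _) (fun _ => h1 _)

theorem integral_triangle_eq_integral_twoPathKernel_mul (μ ν μ' : Measure E) [IsFiniteMeasure μ]
    [IsProbabilityMeasure ν] [IsFiniteMeasure μ'] (hmeas : Measurable e) (h0 : ∀ q, 0 ≤ e q)
    (h1 : ∀ q, e q ≤ 1) :
    (∫ x, ∫ y, ∫ z, e (x, y) * e (y, z) * e (x, z) ∂μ' ∂ν ∂μ) =
      ∫ p, twoPathKernel ν e p * e p ∂(μ.prod μ') := by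
  have inner (x : E) : (∫ y, ∫ z, e (x, y) * e (y, z) * e (x, z) ∂μ' ∂ν) =
      ∫ z, twoPathKernel ν e (x, z) * e (x, z) ∂μ' := by
    have hint :
        Integrable (fun q : E × E => e (x, q.1) * e (q.1, q.2) * e (x, q.2)) (ν.prod μ') :=
      integrable_of_nonneg_of_le_one (by fun_prop)
        (fun _ => mul_nonneg (mul_nonneg (h0 _) (h0 _)) (h0 _))
        fun _ => mul_le_one₀ (mul_le_one₀ (h1 _) (h0 _) (h1 _)) (h0 _) (h1 _)
    rw [integral_integral_swap hint]
    simp only [twoPathKernel, integral_mul_const]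
  simp only [inner]
  exact (integral_prod _ (integrable_of_nonneg_of_le_one
    ((stronglyMeasurable_twoPathKernel ν hmeas).aestronglyMeasurable.mul hmeas.aestronglyMeasurable)
    (fun p => mul_nonneg (twoPathKernel_nonneg ν h0 p) (h0 p))
    fun p => mul_le_one₀ (twoPathKernel_le_one ν hmeas h0 h1 p) (h0 p) (h1 p))).symm

theorem integral_sq_twoPathKernel_le (μ ν μ' : Measure E) [IsFiniteMeasure μ]
    [IsProbabilityMeasure ν] [IsFiniteMeasure μ'] (hmeas : Measurable e) (h0 : ∀ q, 0 ≤ e q)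
    (h1 : ∀ q, e q ≤ 1) :
    ∫ p, twoPathKernel ν e p ^ 2 ∂(μ.prod μ') ≤
      (∫ x, ∫ y, e (x, y) ∂ν ∂μ) * ∫ y, ∫ z, e (y, z) ∂μ' ∂ν := by
  have he_left : Integrable e (μ.prod ν) :=
    integrable_of_nonneg_of_le_one hmeas.aestronglyMeasurable h0 h1
  have he_right : Integrable e (ν.prod μ') :=
    integrable_of_nonneg_of_le_one hmeas.aestronglyMeasurable h0 h1
  have hG2 : Integrable (fun p => twoPathKernel ν e p ^ 2) (μ.prod μ') :=
    (memLp_twoPathKernel ν hmeas h0 h1 2 _).integrable_sq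
  calc ∫ p, twoPathKernel ν e p ^ 2 ∂(μ.prod μ')
      ≤ ∫ p, (∫ y, e (p.1, y) ∂ν) * (∫ y, e (y, p.2) ∂ν) ∂(μ.prod μ') :=
        integral_mono hG2 (he_left.integral_prod_left.mul_prod he_right.integral_prod_right)
          (sq_twoPathKernel_le ν hmeas h0 h1)
    _ = (∫ x, ∫ y, e (x, y) ∂ν ∂μ) * ∫ z, ∫ y, e (y, z) ∂ν ∂μ' :=
        integral_prod_mul (fun x => ∫ y, e (x, y) ∂ν) (fun z => ∫ y, e (y, z) ∂ν)
    _ = (∫ x, ∫ y, e (x, y) ∂ν ∂μ) * ∫ y, ∫ z, e (y, z) ∂μ' ∂ν := by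
        rw [integral_integral_swap (f := fun y z => e (y, z)) he_right]

end TwoPath

theorem node_independent_triangle_probability_bound_general
    {E : Type*} [MeasurableSpace E]
    (μi μj μk : Measure E)
    [IsProbabilityMeasure μi] [IsProbabilityMeasure μj] [IsProbabilityMeasure μk]
    (e : E × E → ℝ)
    (hmeas : Measurable e)
    (h0 : ∀ q, 0 ≤ e q) (h1 : ∀ q, e q ≤ 1) :
    (∫ zi, ∫ zj, ∫ zk, e (zi, zj) * e (zj, zk) * e (zi, zk) ∂μk ∂μj ∂μi) ≤
      Real.sqrt ((∫ zi, ∫ zj, e (zi, zj) ∂μj ∂μi) *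
        (∫ zj, ∫ zk, e (zj, zk) ∂μk ∂μj) *
        (∫ zi, ∫ zk, e (zi, zk) ∂μk ∂μi)) := by
  rw [integral_triangle_eq_integral_twoPathKernel_mul μi μj μk hmeas h0 h1]
  refine (le_abs_self _).trans (Real.abs_le_sqrt ?_)
  calc (∫ p, twoPathKernel μj e p * e p ∂(μi.prod μk)) ^ 2
      ≤ (∫ p, twoPathKernel μj e p ^ 2 ∂(μi.prod μk)) * ∫ p, e p ^ 2 ∂(μi.prod μk) :=
        sq_integral_mul_le_integral_sq_mul_integral_sq
          (ae_of_all _ (twoPathKernel_nonneg μj h0)) (ae_of_all _ h0)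
          (memLp_twoPathKernel μj hmeas h0 h1 2 _)
          (memLp_of_nonneg_of_le_one 2 hmeas.aestronglyMeasurable h0 h1)
    _ ≤ ((∫ zi, ∫ zj, e (zi, zj) ∂μj ∂μi) * ∫ zj, ∫ zk, e (zj, zk) ∂μk ∂μj) *
          ∫ p, e p ∂(μi.prod μk) :=
        mul_le_mul_of_nonneg (integral_sq_twoPathKernel_le μi μj μk hmeas h0 h1)
          (integral_sq_le_integral_of_le_one hmeas.aestronglyMeasurable h0 h1)
          (integral_nonneg fun _ => sq_nonneg _) (integral_nonneg h0)
    _ = _ := by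
        rw [integral_prod e (integrable_of_nonneg_of_le_one hmeas.aestronglyMeasurable h0 h1)]

theorem node_independent_triangle_probability_bound
    {E : Type*} [MeasurableSpace E]
    (μi μj μk : Measure E)
    [IsProbabilityMeasure μi] [IsProbabilityMeasure μj] [IsProbabilityMeasure μk]
    (e : E × E → ℝ)
    (hmeas : Measurable e)
    (h0 : ∀ q, 0 ≤ e q) (h1 : ∀ q, e q ≤ 1)
    (hsym : ∀ x y, e (x, y) = e (y, x)) :
    (∫ zi, ∫ zj, ∫ zk, e (zi, zj) * e (zj, zk) * e (zi, zk) ∂μk ∂μj ∂μi) ≤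
      Real.sqrt ((∫ zi, ∫ zj, e (zi, zj) ∂μj ∂μi) *
        (∫ zj, ∫ zk, e (zj, zk) ∂μk ∂μj) *
        (∫ zi, ∫ zk, e (zi, zk) ∂μk ∂μi)) :=
  node_independent_triangle_probability_bound_general μi μj μk e hmeas h0 h1
end

section
/- Let P be the edge probability matrix of an edge independent model with Vol = ∑_{i<j}P_{ij} and Ov = (∑_{i<j}P_{ij}²)/Vol. Then for any k ≥ 3, the expected number of k-cycles is at most (1/(2k))·(2·Ov·Vol)^{k/2}, and hence O(n^k · Ov^k). -/
/-!
Dropping the injectivity constraint only adds nonnegative terms, and the unrestricted cyclic sum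
is `tr (P ^ k)`. For `k ≥ 2`, Cauchy–Schwarz and submultiplicativity of the Frobenius norm give
`tr (P ^ k) = tr (P ^ (k - 1) * P) ≤ ‖P ^ (k - 1)‖ ‖P‖ ≤ ‖P‖ ^ k`, and for symmetric `P` with zero
diagonal `‖P‖² = 2 ∑_{i<j} P_{ij}² = 2 Ov Vol`. For the second bound, Cauchy–Schwarz over all `n²`
entries gives `2 Vol² ≤ n² Ov Vol`, i.e. `2 Ov Vol ≤ (n Ov)²`.
-/

open Finset

namespace Matrix

variable {ι : Type*} [Fintype ι] [DecidableEq ι] {R : Type*} [CommSemiring R]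

theorem pow_succ_apply_eq_sum_paths (M : Matrix ι ι R) (m : ℕ) (x y : ι) :
    (M ^ (m + 1)) x y =
      ∑ v : Fin m → ι, ∏ i : Fin (m + 1),
        M ((Fin.cons x v : Fin (m + 1) → ι) i) ((Fin.snoc v y : Fin (m + 1) → ι) i) := by
  induction m generalizing x with
  | zero => simp [Fin.snoc_zero]
  | succ m ih =>
    rw [pow_succ', mul_apply, ← (Fin.consEquiv fun _ => ι).sum_comp, Fintype.sum_prod_type]
    refine sum_congr rfl fun z _ => ?_
    simp [Fin.consEquiv, ih, Fin.prod_univ_succ, ← Fin.cons_snoc_eq_snoc_cons, mul_sum]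

theorem trace_pow_eq_sum_cycles (M : Matrix ι ι R) (k : ℕ) [NeZero k] :
    trace (M ^ k) = ∑ v : Fin k → ι, ∏ i, M (v i) (v (i + 1)) := by
  obtain ⟨m, rfl⟩ := Nat.exists_eq_succ_of_ne_zero (NeZero.ne k)
  rw [← (Fin.consEquiv fun _ => ι).sum_comp, Fintype.sum_prod_type]
  simp [trace, pow_succ_apply_eq_sum_paths, Fin.snoc_eq_cons_rotate]

section Frobenius

open scoped Matrix.Norms.Frobenius

variable {m n : Type*} [Fintype m] [Fintype n]

theorem frobenius_norm_eq_sqrt (A : Matrix m n ℝ) : ‖A‖ = √(∑ i, ∑ j, A i j ^ 2) := by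
  simp [frobenius_norm_def, Real.sqrt_eq_rpow]

theorem trace_mul_le_frobenius_norm_mul (A : Matrix m n ℝ) (B : Matrix n m ℝ) :
    trace (A * B) ≤ ‖A‖ * ‖B‖ := by
  calc trace (A * B) = ∑ p : m × n, A p.1 p.2 * Bᵀ p.1 p.2 := by
        simp [trace, mul_apply, Fintype.sum_prod_type]
    _ ≤ √(∑ p : m × n, A p.1 p.2 ^ 2) * √(∑ p : m × n, Bᵀ p.1 p.2 ^ 2) :=
        Real.sum_mul_le_sqrt_mul_sqrt _ _ _
    _ = ‖A‖ * ‖B‖ := by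
        rw [← frobenius_norm_transpose B]
        simp only [frobenius_norm_eq_sqrt, Fintype.sum_prod_type]

theorem trace_pow_le_frobenius_norm_pow [DecidableEq m] (M : Matrix m m ℝ) {k : ℕ} (hk : 2 ≤ k) :
    trace (M ^ k) ≤ ‖M‖ ^ k := by
  obtain ⟨j, rfl⟩ := Nat.exists_eq_add_of_le' hk
  calc trace (M ^ (j + 2)) = trace (M ^ (j + 1) * M) := by rw [← pow_succ]
    _ ≤ ‖M ^ (j + 1)‖ * ‖M‖ := trace_mul_le_frobenius_norm_mul _ _
    _ ≤ ‖M‖ ^ (j + 1) * ‖M‖ := by gcongr; exact norm_pow_le' M j.succ_pos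
    _ = ‖M‖ ^ (j + 2) := (pow_succ _ _).symm

end Frobenius

end Matrix

section SymmetricZeroDiagonal

variable {ι : Type*} [Fintype ι] [LinearOrder ι]

theorem sum_sum_eq_two_mul_sum_sum_lt {R : Type*} [NonAssocSemiring R] (f : ι → ι → R)
    (hsym : ∀ i j, f i j = f j i) (hdiag : ∀ i, f i i = 0) :
    ∑ i, ∑ j, f i j = 2 * ∑ i, ∑ j, if i < j then f i j else 0 := by
  have hsplit : ∀ i j, f i j = (if i < j then f i j else 0) + (if j < i then f j i else 0) := by
    intro i j
    rcases lt_trichotomy i j with h | rfl | h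
    · simp [h, h.not_gt]
    · simp [hdiag]
    · simp [h, h.not_gt, hsym i j]
  calc ∑ i, ∑ j, f i j
      = ∑ i, ∑ j, ((if i < j then f i j else 0) + (if j < i then f j i else 0)) :=
        sum_congr rfl fun i _ => sum_congr rfl fun j _ => hsplit i j
    _ = 2 * ∑ i, ∑ j, if i < j then f i j else 0 := by
        simp only [sum_add_distrib, two_mul]
        rw [Finset.sum_comm (f := fun i j => if j < i then f j i else 0)]

theorem two_mul_sq_sum_lt_le_card_sq_mul (P : ι → ι → ℝ) (hsym : ∀ i j, P i j = P j i)
    (hdiag : ∀ i, P i i = 0) :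
    2 * (∑ i, ∑ j, if i < j then P i j else 0) ^ 2 ≤
      (Fintype.card ι : ℝ) ^ 2 * ∑ i, ∑ j, if i < j then P i j ^ 2 else 0 := by
  have hcs : (∑ i, ∑ j, P i j) ^ 2 ≤ (Fintype.card ι : ℝ) ^ 2 * ∑ i, ∑ j, P i j ^ 2 := by
    simpa [← Fintype.sum_prod_type', sq] using
      sq_sum_le_card_mul_sum_sq (s := (univ : Finset (ι × ι))) (f := fun p => P p.1 p.2)
  rw [sum_sum_eq_two_mul_sum_sum_lt P hsym hdiag,
    sum_sum_eq_two_mul_sum_sum_lt (fun i j => P i j ^ 2) (by simp [hsym]) (by simp [hdiag])] at hcs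
  nlinarith

open scoped Matrix.Norms.Frobenius in
open Classical in
theorem sum_injective_cycles_le (P : ι → ι → ℝ) (h0 : ∀ i j, 0 ≤ P i j)
    (hsym : ∀ i j, P i j = P j i) (hdiag : ∀ i, P i i = 0) (k : ℕ) [NeZero k] (hk : 2 ≤ k) :
    (∑ v : Fin k → ι, if Function.Injective v then ∏ i, P (v i) (v (i + 1)) else 0) ≤
      (2 * ∑ i, ∑ j, if i < j then P i j ^ 2 else 0) ^ ((k : ℝ) / 2) := by
  have hnorm : ‖Matrix.of P‖ = √(2 * ∑ i, ∑ j, if i < j then P i j ^ 2 else 0) := by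
    rw [Matrix.frobenius_norm_eq_sqrt, ← sum_sum_eq_two_mul_sum_sum_lt (fun i j => P i j ^ 2)
      (by simp [hsym]) (by simp [hdiag])]
    rfl
  calc (∑ v : Fin k → ι, if Function.Injective v then ∏ i, P (v i) (v (i + 1)) else 0)
      ≤ ∑ v : Fin k → ι, ∏ i, P (v i) (v (i + 1)) :=
        sum_le_sum fun v _ => by
          split_ifs
          exacts [le_rfl, prod_nonneg fun i _ => h0 _ _]
    _ = Matrix.trace (Matrix.of P ^ k) := (Matrix.trace_pow_eq_sum_cycles _ k).symm
    _ ≤ ‖Matrix.of P‖ ^ k := Matrix.trace_pow_le_frobenius_norm_pow _ hk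
    _ = _ := by
        rw [hnorm, Real.rpow_div_two_eq_sqrt _ (by positivity), Real.rpow_natCast]

end SymmetricZeroDiagonal

theorem Real.rpow_div_two_le_pow_of_le_sq {x y : ℝ} (hx : 0 ≤ x) (hy : 0 ≤ y) (h : x ≤ y ^ 2)
    (k : ℕ) : x ^ ((k : ℝ) / 2) ≤ y ^ k := by
  rw [Real.rpow_div_two_eq_sqrt _ hx, Real.rpow_natCast]
  gcongr
  exact Real.sqrt_le_iff.mpr ⟨hy, h⟩

open Classical in
theorem edge_independent_k_cycle_bound_general
    (n k : ℕ) [NeZero k] (hk : 3 ≤ k)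
    (P : Fin n → Fin n → ℝ)
    (h0 : ∀ i j, 0 ≤ P i j)
    (hsym : ∀ i j, P i j = P j i) (hdiag : ∀ i, P i i = 0)
    (Vol Ov : ℝ)
    (hVol : Vol = ∑ i : Fin n, ∑ j : Fin n, if i < j then P i j else 0)
    (hVolpos : 0 < Vol)
    (hOv : Ov = (∑ i : Fin n, ∑ j : Fin n, if i < j then P i j ^ 2 else 0) / Vol) :
    ((1 : ℝ) / (2 * k)) * (∑ v : Fin k → Fin n,
        if Function.Injective v then ∏ i, P (v i) (v (i + 1)) else 0) ≤
      ((1 : ℝ) / (2 * k)) * (2 * Ov * Vol) ^ ((k : ℝ) / 2) ∧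
    ((1 : ℝ) / (2 * k)) * (∑ v : Fin k → Fin n,
        if Function.Injective v then ∏ i, P (v i) (v (i + 1)) else 0) ≤
      (n : ℝ) ^ k * Ov ^ k := by
  have hQ : (∑ i : Fin n, ∑ j : Fin n, if i < j then P i j ^ 2 else 0) = Ov * Vol := by
    rw [hOv, div_mul_cancel₀ _ hVolpos.ne']
  have hcycles := sum_injective_cycles_le P h0 hsym hdiag k (by omega)
  rw [hQ, ← mul_assoc] at hcycles
  have hcoef : 0 ≤ (1 : ℝ) / (2 * k) := by positivity
  refine ⟨mul_le_mul_of_nonneg_left hcycles hcoef, ?_⟩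
  have hOv0 : 0 ≤ Ov := by rw [hOv]; positivity
  have hsq : 2 * Ov * Vol ≤ (n * Ov) ^ 2 := by
    have hcs := two_mul_sq_sum_lt_le_card_sq_mul P hsym hdiag
    rw [← hVol, hQ, Fintype.card_fin] at hcs
    nlinarith
  have hcoef_le : (1 : ℝ) / (2 * k) ≤ 1 := by
    rw [div_le_one (by positivity)]
    norm_cast
    omega
  calc _ ≤ (1 : ℝ) / (2 * k) * (n * Ov) ^ k := by
        gcongr
        exact hcycles.trans
          (Real.rpow_div_two_le_pow_of_le_sq (by positivity) (by positivity) hsq k)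
    _ ≤ (n * Ov) ^ k := mul_le_of_le_one_left (by positivity) hcoef_le
    _ = (n : ℝ) ^ k * Ov ^ k := mul_pow _ _ _

open Classical in
theorem edge_independent_k_cycle_bound
    (n k : ℕ) [NeZero k] (hk : 3 ≤ k)
    (P : Fin n → Fin n → ℝ)
    (h0 : ∀ i j, 0 ≤ P i j) (h1 : ∀ i j, P i j ≤ 1)
    (hsym : ∀ i j, P i j = P j i) (hdiag : ∀ i, P i i = 0)
    (Vol Ov : ℝ)
    (hVol : Vol = ∑ i : Fin n, ∑ j : Fin n, if i < j then P i j else 0)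
    (hVolpos : 0 < Vol)
    (hOv : Ov = (∑ i : Fin n, ∑ j : Fin n, if i < j then P i j ^ 2 else 0) / Vol) :
    ((1 : ℝ) / (2 * k)) * (∑ v : Fin k → Fin n,
        if Function.Injective v then ∏ i, P (v i) (v (i + 1)) else 0) ≤
      ((1 : ℝ) / (2 * k)) * (2 * Ov * Vol) ^ ((k : ℝ) / 2) ∧
    ((1 : ℝ) / (2 * k)) * (∑ v : Fin k → Fin n,
        if Function.Injective v then ∏ i, P (v i) (v (i + 1)) else 0) ≤
      (n : ℝ) ^ k * Ov ^ k :=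
  edge_independent_k_cycle_bound_general n k hk P h0 hsym hdiag Vol Ov hVol hVolpos hOv
end
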